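/- arXiv:1912.03710 — 6 statements merged into one kernel-verified Lean document; each statement's English description precedes it below -/
import Mathlib

section
/- Let R be a Noetherian ring of prime characteristic p, I₁,…,I_t ⊆ R ideals, and J_• = {J_{p^e}} a p-family of ideals (i.e., J_{p^e}^{[p]} ⊆ J_{p^{e+1}} for all e) with I₁,…,I_t ⊆ √J₁. Define V(p^e) = {(a₁,…,a_t) ∈ ℕ^t : I₁^{a₁}⋯I_t^{a_t} ⊄ J_{p^e}}. Then there exists a constant C such that |V(p^e)| ≤ C·p^{et} for all e; in particular the sequence |V(p^e)|/p^{et} is bounded. -/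
open Ideal Filter MeasureTheory

/-- The `q`-th Frobenius power of an ideal: the ideal generated by `q`-th powers of its
elements (used with `q = p ^ e`). -/
def Ideal.frobPow {R : Type*} [CommRing R] (J : Ideal R) (q : ℕ) : Ideal R :=
  Ideal.span ((fun a => a ^ q) '' (J : Set R))

/-- The set `V` of exponent vectors `a ∈ ℕ^t` with `I₁^{a₁} ⋯ I_t^{a_t} ⊄ J'`. -/
def Vnu {R : Type*} [CommRing R] {t : ℕ} (I : Fin t → Ideal R) (J' : Ideal R) :
    Set (Fin t → ℕ) :=
  {a | ¬ (∏ i, I i ^ a i) ≤ J'}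

lemma frobPow_mono {R : Type*} [CommRing R] {J K : Ideal R} (h : J ≤ K) (q : ℕ) :
    J.frobPow q ≤ K.frobPow q :=
  Ideal.span_mono (Set.image_mono h)

lemma pow_mem_frobPow {R : Type*} [CommRing R] {J : Ideal R} {x : R} (hx : x ∈ J) (q : ℕ) :
    x ^ q ∈ J.frobPow q :=
  Ideal.subset_span ⟨x, hx, rfl⟩

/-- Pigeonhole: if `J` is spanned by a nonempty finset `T`, then `J ^ (T.card * q) ≤ J^{[q]}`. -/
lemma pow_card_mul_le_frobPow {R : Type*} [CommRing R] (T : Finset R) (hne : T.Nonempty) (q : ℕ) :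
    (Ideal.span (T : Set R)) ^ (T.card * q) ≤ (Ideal.span (T : Set R)).frobPow q := by
  classical
  rw [show Ideal.span (T : Set R) = Submodule.span R (T : Set R) from rfl, Submodule.span_pow]
  apply Ideal.span_le.2
  intro a ha
  obtain ⟨f, hf⟩ := Set.mem_pow.1 ha
  rw [List.prod_ofFn] at hf
  have hmaps : ∀ i ∈ (Finset.univ : Finset (Fin (T.card * q))), ((f i : R)) ∈ T := by
    intro i _
    exact (f i).2
  obtain ⟨x, hxT, hq⟩ := Finset.exists_le_card_fiber_of_mul_le_card_of_maps_to (n := q) hmaps hne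
    (by simp)
  -- x ^ q divides a
  set F := Finset.univ.filter (fun i => ((f i : R)) = x) with hF
  have hprod : a = (∏ i ∈ F, (f i : R)) * ∏ i ∈ Finset.univ.filter (fun i => ¬ ((f i : R)) = x), (f i : R) := by
    rw [← hf, Finset.prod_filter_mul_prod_filter_not]
  have hFx : (∏ i ∈ F, (f i : R)) = x ^ F.card := by
    rw [Finset.prod_congr rfl (fun i hi => (Finset.mem_filter.1 hi).2), Finset.prod_const]
  have hcardx : x ^ F.card = x ^ q * x ^ (F.card - q) := by
    rw [← pow_add, Nat.add_sub_cancel' hq]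
  have hdvd : x ^ q ∣ a :=
    ⟨x ^ (F.card - q) * ∏ i ∈ Finset.univ.filter (fun i => ¬ ((f i : R)) = x), (f i : R),
      by rw [hprod, hFx, hcardx]; ring⟩
  obtain ⟨c, hc⟩ := hdvd
  rw [hc]
  exact Ideal.mul_mem_right _ _ (pow_mem_frobPow (Ideal.subset_span hxT) q)

lemma frobPow_pow_le {R : Type*} [CommRing R] (p : ℕ) (J : ℕ → Ideal R)
    (hfam : ∀ e, (J e).frobPow p ≤ J (e + 1)) :
    ∀ e, (J 0).frobPow (p ^ e) ≤ J e := by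
  intro e
  induction e with
  | zero =>
      apply Ideal.span_le.2
      rintro a ⟨x, hx, rfl⟩
      simpa using hx
  | succ e ih =>
      refine le_trans ?_ (le_trans (frobPow_mono ih p) (hfam e))
      apply Ideal.span_le.2
      rintro a ⟨x, hx, rfl⟩
      have : x ^ p ^ (e + 1) = (x ^ p ^ e) ^ p := by rw [← pow_mul, pow_succ]
      show x ^ p ^ (e + 1) ∈ _
      rw [this]
      exact pow_mem_frobPow (pow_mem_frobPow hx _) p

/-- For a `p`-family `J_{p^e} = J e` with `I₁,…,I_t ⊆ √J₁`, the counts `|V(p^e)|`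
are bounded by `C · p^{e t}`. -/
theorem stmt1 {R : Type*} [CommRing R] [IsNoetherianRing R] (p : ℕ) [Fact p.Prime]
    [CharP R p] {t : ℕ} (I : Fin t → Ideal R) (J : ℕ → Ideal R)
    (hfam : ∀ e, (J e).frobPow p ≤ J (e + 1))
    (hrad : ∀ i, I i ≤ (J 0).radical) :
    ∃ C : ℝ, ∀ e : ℕ, ((Vnu I (J e)).ncard : ℝ) ≤ C * (p : ℝ) ^ (e * t) := by
  classical
  -- choose generators of J 0, including 0 so the set is nonempty
  obtain ⟨T₀, hT₀⟩ := (isNoetherianRing_iff_ideal_fg R).1 ‹IsNoetherianRing R› (J 0)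
  set T : Finset R := insert 0 T₀ with hT
  have hspan : Ideal.span (T : Set R) = J 0 := by
    rw [hT, Finset.coe_insert]
    show Submodule.span R _ = _
    rw [Submodule.span_insert_zero]
    exact hT₀
  have hTne : T.Nonempty := ⟨0, Finset.mem_insert_self _ _⟩
  -- choose ℓ i with (I i) ^ ℓ i ≤ J 0, ℓ i ≥ 1
  have hℓ : ∀ i, ∃ ℓ : ℕ, 1 ≤ ℓ ∧ (I i) ^ ℓ ≤ J 0 := by
    intro i
    obtain ⟨n, hn⟩ := Ideal.exists_pow_le_of_le_radical_of_fg (hrad i)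
      (IsNoetherian.noetherian (I i))
    exact ⟨n + 1, Nat.le_add_left 1 n, le_trans (Ideal.pow_le_pow_right (Nat.le_succ n)) hn⟩
  choose ℓ hℓ1 hℓJ using hℓ
  set N : Fin t → ℕ := fun i => ℓ i * T.card with hN
  have hNpos : ∀ i, 1 ≤ N i := fun i => Nat.one_le_iff_ne_zero.2 <| by
    have := hℓ1 i
    have := hTne.card_pos
    positivity
  -- key: I i ^ (N i * p ^ e) ≤ J e
  have key : ∀ i e, (I i) ^ (N i * p ^ e) ≤ J e := by
    intro i e
    calc (I i) ^ (N i * p ^ e) = ((I i) ^ (ℓ i)) ^ (T.card * p ^ e) := by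
          rw [← pow_mul, hN]; ring_nf
      _ ≤ (J 0) ^ (T.card * p ^ e) := Ideal.pow_right_mono (hℓJ i) _
      _ = (Ideal.span (T : Set R)) ^ (T.card * p ^ e) := by rw [hspan]
      _ ≤ (Ideal.span (T : Set R)).frobPow (p ^ e) := pow_card_mul_le_frobPow T hTne _
      _ = (J 0).frobPow (p ^ e) := by rw [hspan]
      _ ≤ J e := frobPow_pow_le p J hfam e
  refine ⟨∏ i, (N i : ℝ), fun e => ?_⟩
  -- V ⊆ box
  have hsub : Vnu I (J e) ⊆ ↑(Fintype.piFinset fun i => Finset.range (N i * p ^ e)) := by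
    intro a ha
    simp only [Finset.coe_sort_coe, Finset.mem_coe, Fintype.mem_piFinset, Finset.mem_range]
    intro i
    by_contra h
    push_neg at h
    exact ha <| le_trans (le_trans Ideal.prod_le_inf (Finset.inf_le (Finset.mem_univ i)))
      (le_trans (Ideal.pow_le_pow_right h) (key i e))
  have hcard : (Vnu I (J e)).ncard ≤ ∏ i, (N i * p ^ e) := by
    calc (Vnu I (J e)).ncard ≤ (↑(Fintype.piFinset fun i => Finset.range (N i * p ^ e)) : Set (Fin t → ℕ)).ncard :=
        Set.ncard_le_ncard hsub (Set.toFinite _)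
      _ = (Fintype.piFinset fun i => Finset.range (N i * p ^ e)).card := Set.ncard_coe_finset _
      _ = ∏ i, (N i * p ^ e) := by simp [Fintype.card_piFinset]
  calc ((Vnu I (J e)).ncard : ℝ) ≤ ((∏ i, (N i * p ^ e) : ℕ) : ℝ) := by exact_mod_cast hcard
    _ = (∏ i, (N i : ℝ)) * (p : ℝ) ^ (e * t) := by
        push_cast
        rw [Finset.prod_mul_distrib, Finset.prod_const]
        simp [← pow_mul, mul_comm e t]
end

section
/- Let R be a Noetherian ring of characteristic p, I₁,…,I_t ideals, and J an ideal with I₁,…,I_t ⊆ √J. Then Vol_F^{J^{[p]}}(I₁,…,I_t) = p^t · Vol_F^J(I₁,…,I_t). -/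
open Ideal Filter MeasureTheory

lemma frobPow_eq_map {R : Type*} [CommRing R] (p : ℕ) [Fact p.Prime] [CharP R p]
    (J : Ideal R) (e : ℕ) : J.frobPow (p ^ e) = Ideal.map (iterateFrobenius R p e) J := by
  rfl

lemma frobPow_frobPow {R : Type*} [CommRing R] (p : ℕ) [Fact p.Prime] [CharP R p]
    (J : Ideal R) (e : ℕ) : (J.frobPow p).frobPow (p ^ e) = J.frobPow (p ^ (e + 1)) := by
  have h1 : J.frobPow p = Ideal.map (iterateFrobenius R p 1) J := by
    have h := frobPow_eq_map p J 1
    rwa [pow_one] at h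
  conv_lhs => rw [h1]
  rw [frobPow_eq_map p _ e, frobPow_eq_map p J (e + 1), Ideal.map_map, ← iterateFrobenius_add]

/-- `Vol_F^{J^{[p]}}(I) = p^t · Vol_F^J(I)`. -/
theorem stmt4 {R : Type*} [CommRing R] [IsNoetherianRing R] (p : ℕ) [Fact p.Prime]
    [CharP R p] {t : ℕ} (I : Fin t → Ideal R) (J : Ideal R)
    (hrad : ∀ i, I i ≤ J.radical) (VJ VJp : ℝ)
    (hVJ : Tendsto (fun e : ℕ => ((Vnu I (J.frobPow (p ^ e))).ncard : ℝ) / (p : ℝ) ^ (e * t))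
      atTop (nhds VJ))
    (hVJp : Tendsto
      (fun e : ℕ => ((Vnu I ((J.frobPow p).frobPow (p ^ e))).ncard : ℝ) / (p : ℝ) ^ (e * t))
      atTop (nhds VJp)) :
    VJp = (p : ℝ) ^ t * VJ := by
  have hp : (p : ℝ) ≠ 0 := Nat.cast_ne_zero.mpr (Fact.out : p.Prime).ne_zero
  have hshift : Tendsto
      (fun e : ℕ => ((Vnu I (J.frobPow (p ^ (e + 1)))).ncard : ℝ) / (p : ℝ) ^ ((e + 1) * t))
      atTop (nhds VJ) := hVJ.comp (tendsto_add_atTop_nat 1)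
  have hmul : Tendsto
      (fun e : ℕ => (p : ℝ) ^ t *
        (((Vnu I (J.frobPow (p ^ (e + 1)))).ncard : ℝ) / (p : ℝ) ^ ((e + 1) * t)))
      atTop (nhds ((p : ℝ) ^ t * VJ)) := hshift.const_mul _
  have heq : (fun e : ℕ => (p : ℝ) ^ t *
        (((Vnu I (J.frobPow (p ^ (e + 1)))).ncard : ℝ) / (p : ℝ) ^ ((e + 1) * t)))
      = (fun e : ℕ =>
        ((Vnu I ((J.frobPow p).frobPow (p ^ e))).ncard : ℝ) / (p : ℝ) ^ (e * t)) := by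
    funext e
    rw [frobPow_frobPow p J e]
    rw [add_mul, one_mul, pow_add]
    field_simp
    ring
  rw [heq] at hmul
  exact tendsto_nhds_unique hVJp hmul
end

section
/- Let R be a Noetherian ring of characteristic p, I₁,…,I_t ideals, and J an ideal with I₁,…,I_t ⊆ √J. Then Vol_F^J(I₁,…,I_t) ≤ Vol_F^J(I₁,…,I_{t-1}) · c^J(I_t), where c^J(I_t) is the F-threshold of I_t with respect to J. -/
open Ideal Filter MeasureTheory

/-- `ν_I^{J'} = max {n : I^n ⊄ J'}`. -/
noncomputable def nuF {R : Type*} [CommRing R] (I J' : Ideal R) : ℕ :=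
  sSup {n : ℕ | ¬ I ^ n ≤ J'}

/-!
Sending `a ∈ ℕ^{t+1}` to `(a₁, …, a_t)` and `a_{t+1}` embeds `V^J(I₁,…,I_{t+1})` at
level `p^e` into `V^J(I₁,…,I_t) × {0, …, ν_{I_{t+1}}^J(p^e)}`: if
`I₁^{a₁} ⋯ I_{t+1}^{a_{t+1}} ⊄ J^{[p^e]}`, then neither the product of the first `t` factors
nor the last factor lies in `J^{[p^e]}`. Dividing the resulting bound on cardinalities by
`p^{e(t+1)} = p^{et} · p^e` and letting `e → ∞` gives the inequality, the extra `+ 1`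
disappearing because `p^e → ∞`. The radical hypothesis makes every set involved finite, since
a Noetherian ideal inside `√J` has a power inside `J^{[q]}`.
-/

section Counting

variable {R : Type*} [CommRing R]

lemma Ideal.le_radical_frobPow (J : Ideal R) (q : ℕ) : J ≤ (J.frobPow q).radical := fun x hx =>
  Ideal.mem_radical_iff.2 ⟨q, Ideal.subset_span ⟨x, hx, rfl⟩⟩

lemma Ideal.exists_pow_le_frobPow [IsNoetherianRing R] {K J : Ideal R} (hK : K ≤ J.radical)
    (q : ℕ) : ∃ n, K ^ n ≤ J.frobPow q :=
  Ideal.exists_pow_le_of_le_radical_of_fg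
    (hK.trans (Ideal.radical_le_radical_iff.2 (J.le_radical_frobPow q)))
    (IsNoetherian.noetherian K)

lemma Ideal.prod_pow_le_pow {t : ℕ} (I : Fin t → Ideal R) (a : Fin t → ℕ) (j : Fin t) :
    ∏ i, I i ^ a i ≤ I j ^ a j :=
  Ideal.prod_le_inf.trans (Finset.inf_le (Finset.mem_univ j))

lemma bddAbove_not_pow_le {K J' : Ideal R} {n : ℕ} (hn : K ^ n ≤ J') :
    BddAbove {m : ℕ | ¬ K ^ m ≤ J'} :=
  ⟨n, fun _ hm => not_lt.1 fun h => hm ((Ideal.pow_le_pow_right h.le).trans hn)⟩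

variable {t : ℕ} {I : Fin t → Ideal R} {J' : Ideal R}

lemma Vnu_subset_pi_Iio {n : Fin t → ℕ} (hn : ∀ i, I i ^ n i ≤ J') :
    Vnu I J' ⊆ Set.univ.pi fun i => Set.Iio (n i) := fun a ha i _ =>
  not_le.1 fun h =>
    ha ((Ideal.prod_pow_le_pow I a i).trans ((Ideal.pow_le_pow_right h).trans (hn i)))

lemma Vnu_finite (h : ∀ i, ∃ n, I i ^ n ≤ J') : (Vnu I J').Finite := by
  choose n hn using h
  exact (Set.Finite.pi fun i => Set.finite_Iio (n i)).subset (Vnu_subset_pi_Iio hn)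

lemma le_nuF_of_mem_Vnu {a : Fin t → ℕ} (ha : a ∈ Vnu I J') (i : Fin t)
    (hbdd : BddAbove {m : ℕ | ¬ I i ^ m ≤ J'}) : a i ≤ nuF (I i) J' :=
  le_csSup hbdd fun h => ha ((Ideal.prod_pow_le_pow I a i).trans h)

lemma init_mem_Vnu {I : Fin (t + 1) → Ideal R} {a : Fin (t + 1) → ℕ} (ha : a ∈ Vnu I J') :
    Fin.init a ∈ Vnu (Fin.init I) J' := fun h =>
  ha <| calc
    ∏ i, I i ^ a i = (∏ i, Fin.init I i ^ Fin.init a i) * I (Fin.last t) ^ a (Fin.last t) :=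
      Fin.prod_univ_castSucc _
    _ ≤ J' := Ideal.mul_le_left.trans h

lemma ncard_Vnu_le {I : Fin (t + 1) → Ideal R} (h : ∀ i, ∃ n, I i ^ n ≤ J') :
    (Vnu I J').ncard ≤ (Vnu (Fin.init I) J').ncard * (nuF (I (Fin.last t)) J' + 1) := by
  obtain ⟨n, hn⟩ := h (Fin.last t)
  have hmaps : ∀ a ∈ Vnu I J', (Fin.init a, a (Fin.last t)) ∈
      Vnu (Fin.init I) J' ×ˢ Set.Iic (nuF (I (Fin.last t)) J') := fun a ha =>
    ⟨init_mem_Vnu ha, le_nuF_of_mem_Vnu ha _ (bddAbove_not_pow_le hn)⟩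
  have hinj : Set.InjOn (fun a : Fin (t + 1) → ℕ => (Fin.init a, a (Fin.last t))) (Vnu I J') :=
    fun a _ b _ hab => by
      rw [← Fin.snoc_init_self a, ← Fin.snoc_init_self b]
      simp only [Prod.mk.injEq] at hab
      rw [hab.1, hab.2]
  have hfin := (Vnu_finite fun i => h i.castSucc).prod (Set.finite_Iic (nuF (I (Fin.last t)) J'))
  calc (Vnu I J').ncard ≤ (Vnu (Fin.init I) J' ×ˢ Set.Iic (nuF (I (Fin.last t)) J')).ncard :=
        Set.ncard_le_ncard_of_injOn _ hmaps hinj hfin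
    _ = _ := by rw [Set.ncard_prod, ← Finset.coe_Iic, Set.ncard_coe_finset, Nat.card_Iic]

end Counting

lemma Filter.Tendsto.add_one_div_pow {x : ℕ → ℝ} {r c : ℝ} (hr : 1 < r)
    (h : Tendsto (fun e => x e / r ^ e) atTop (nhds c)) :
    Tendsto (fun e => (x e + 1) / r ^ e) atTop (nhds c) := by
  simpa [add_div] using h.add (tendsto_inv_atTop_zero.comp (tendsto_pow_atTop_atTop_of_one_lt hr))

theorem stmt5_general {R : Type*} [CommRing R] [IsNoetherianRing R] (p : ℕ) [Fact p.Prime]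
    {t : ℕ} (I : Fin (t + 1) → Ideal R) (J : Ideal R)
    (hrad : ∀ i, I i ≤ J.radical) (L L' c : ℝ)
    (hL : Tendsto
      (fun e : ℕ => ((Vnu I (J.frobPow (p ^ e))).ncard : ℝ) / (p : ℝ) ^ (e * (t + 1)))
      atTop (nhds L))
    (hL' : Tendsto
      (fun e : ℕ =>
        ((Vnu (fun i : Fin t => I i.castSucc) (J.frobPow (p ^ e))).ncard : ℝ) /
          (p : ℝ) ^ (e * t))
      atTop (nhds L'))
    (hc : Tendsto (fun e : ℕ => (nuF (I (Fin.last t)) (J.frobPow (p ^ e)) : ℝ) / (p : ℝ) ^ e)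
      atTop (nhds c)) :
    L ≤ L' * c := by
  have hp : (1 : ℝ) < p := by exact_mod_cast (Fact.out : p.Prime).one_lt
  refine le_of_tendsto_of_tendsto' hL (hL'.mul (hc.add_one_div_pow hp)) fun e => ?_
  have hcard := ncard_Vnu_le fun i => Ideal.exists_pow_le_frobPow (hrad i) (p ^ e)
  rw [show (p : ℝ) ^ (e * (t + 1)) = p ^ (e * t) * p ^ e by ring, div_mul_div_comm]
  gcongr
  exact_mod_cast hcard

/-- `Vol_F^J(I₁,…,I_{t+1}) ≤ Vol_F^J(I₁,…,I_t) · c^J(I_{t+1})`. -/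
theorem stmt5 {R : Type*} [CommRing R] [IsNoetherianRing R] (p : ℕ) [Fact p.Prime]
    [CharP R p] {t : ℕ} (I : Fin (t + 1) → Ideal R) (J : Ideal R)
    (hrad : ∀ i, I i ≤ J.radical) (L L' c : ℝ)
    (hL : Tendsto
      (fun e : ℕ => ((Vnu I (J.frobPow (p ^ e))).ncard : ℝ) / (p : ℝ) ^ (e * (t + 1)))
      atTop (nhds L))
    (hL' : Tendsto
      (fun e : ℕ =>
        ((Vnu (fun i : Fin t => I i.castSucc) (J.frobPow (p ^ e))).ncard : ℝ) /
          (p : ℝ) ^ (e * t))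
      atTop (nhds L'))
    (hc : Tendsto (fun e : ℕ => (nuF (I (Fin.last t)) (J.frobPow (p ^ e)) : ℝ) / (p : ℝ) ^ e)
      atTop (nhds c)) :
    L ≤ L' * c :=
  stmt5_general p I J hrad L L' c hL hL' hc
end

section
/- Let R be a Noetherian ring of characteristic p, I₁,…,I_t ideals and J_• a p-family with I₁,…,I_t ⊆ √J₁. Then the F-volume is unchanged upon replacing I₁ by its integral closure: Vol_F^{J_•}(I₁,…,I_t) = Vol_F^{J_•}(\overline{I₁}, I₂,…,I_t). Consequently Vol_F^{J_•}(I₁,…,I_t) = Vol_F^{J_•}(\overline{I₁},…,\overline{I_t}). -/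
open Ideal Filter MeasureTheory

/-- The integral closure of an ideal `I`: the ideal generated by all elements `x`
satisfying an equation `x^n + a₁ x^{n-1} + ⋯ + aₙ = 0` with `aᵢ ∈ I^i`. -/
def Ideal.intCl {R : Type*} [CommRing R] (I : Ideal R) : Ideal R :=
  Ideal.span {x : R | ∃ n : ℕ, 0 < n ∧ ∃ a : ℕ → R,
    (∀ i, 1 ≤ i → i ≤ n → a i ∈ I ^ i) ∧
    x ^ n + ∑ i ∈ Finset.Icc 1 n, a i * x ^ (n - i) = 0}

/-!
If `x` satisfies an equation of integral dependence of degree `n` over `B`, then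
`D = B + (x)` satisfies `D ^ n = B * D ^ (n - 1)`, hence `D ^ m ⊆ B ^ (m - n + 1)`. Since `R` is
Noetherian, `Ī` is obtained from `I` by adjoining finitely many such elements, so
`Ī ^ m ⊆ I ^ (m - ℓ)` for a fixed `ℓ`. On the other hand `Iᵢ ⊆ √J₁` and the p-family property
give `Iᵢ ^ m ⊆ J_{p^e}` once `m ≥ C p^e`, so every exponent vector counted for the larger ideals
lies in the box `[0, C' p^e)^{t+1}`, and subtracting `ℓ` from each coordinate lands in the
vectors counted for the smaller ideals. The vectors with some coordinate below `ℓ` number at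
most `(t + 1) ℓ (C' p^e)^t = o(p^{e(t+1)})`.
-/

section IntegralClosure

variable {R : Type*} [CommRing R]

def IsIntegralOverIdeal (I : Ideal R) (x : R) : Prop :=
  ∃ n : ℕ, 0 < n ∧ ∃ a : ℕ → R,
    (∀ i, 1 ≤ i → i ≤ n → a i ∈ I ^ i) ∧
    x ^ n + ∑ i ∈ Finset.Icc 1 n, a i * x ^ (n - i) = 0

theorem Ideal.intCl_eq_span (I : Ideal R) : I.intCl = span {x | IsIntegralOverIdeal I x} := rfl

theorem IsIntegralOverIdeal.mono {I B : Ideal R} {x : R} (hx : IsIntegralOverIdeal I x)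
    (hIB : I ≤ B) : IsIntegralOverIdeal B x := by
  obtain ⟨n, hn, a, ha, heq⟩ := hx
  exact ⟨n, hn, a, fun i h₁ h₂ => pow_right_mono hIB i (ha i h₁ h₂), heq⟩

theorem Ideal.le_intCl (I : Ideal R) : I ≤ I.intCl := fun x hx =>
  subset_span ⟨1, one_pos, fun _ => -x, fun i h₁ h₂ => by
    obtain rfl : i = 1 := by omega
    simpa using hx, by simp⟩

theorem Ideal.sup_pow_succ_le (B X : Ideal R) (k : ℕ) :
    (B ⊔ X) ^ (k + 1) ≤ B * (B ⊔ X) ^ k ⊔ X ^ (k + 1) := by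
  induction k with
  | zero => simp
  | succ k ih =>
    calc (B ⊔ X) ^ (k + 2) = B * (B ⊔ X) ^ (k + 1) ⊔ X * (B ⊔ X) ^ (k + 1) := by
          rw [pow_succ' _ (k + 1), sup_mul]
      _ ≤ B * (B ⊔ X) ^ (k + 1) ⊔ X * (B * (B ⊔ X) ^ k ⊔ X ^ (k + 1)) :=
          sup_le_sup_left (mul_mono_right ih) _
      _ ≤ B * (B ⊔ X) ^ (k + 1) ⊔ X ^ (k + 2) := by
          rw [mul_sup, ← pow_succ', ← sup_assoc, mul_left_comm, pow_succ' _ k]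
          exact sup_le_sup_right (sup_le le_rfl (mul_mono_right (mul_mono_left le_sup_right))) _

theorem Ideal.pow_le_pow_sub_of_pow_succ_le {B D : Ideal R} {k : ℕ}
    (h : D ^ (k + 1) ≤ B * D ^ k) (m : ℕ) : D ^ m ≤ B ^ (m - k) := by
  have key : ∀ j, D ^ (k + j) ≤ B ^ j * D ^ k := by
    intro j
    induction j with
    | zero => simp
    | succ j ih =>
      calc D ^ (k + (j + 1)) = D ^ j * D ^ (k + 1) := by ring
        _ ≤ D ^ j * (B * D ^ k) := mul_mono_right h
        _ = B * D ^ (k + j) := by ring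
        _ ≤ B * (B ^ j * D ^ k) := mul_mono_right ih
        _ = B ^ (j + 1) * D ^ k := by ring
  rcases le_or_gt k m with hkm | hmk
  · obtain ⟨j, rfl⟩ := Nat.exists_eq_add_of_le hkm
    simpa using (key j).trans mul_le_left
  · simp [Nat.sub_eq_zero_of_le hmk.le]

theorem IsIntegralOverIdeal.exists_sup_span_singleton_pow_le {B : Ideal R} {x : R}
    (hx : IsIntegralOverIdeal B x) : ∃ k, ∀ m, (B ⊔ span {x}) ^ m ≤ B ^ (m - k) := by
  obtain ⟨n, hn, a, ha, heq⟩ := hx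
  set D := B ⊔ span {x}
  have hxn : x ^ n ∈ B * D ^ (n - 1) := by
    rw [eq_neg_of_add_eq_zero_left heq]
    refine neg_mem (sum_mem fun i hi => ?_)
    obtain ⟨h₁, h₂⟩ := Finset.mem_Icc.mp hi
    obtain ⟨j, rfl⟩ : ∃ j, i = j + 1 := ⟨i - 1, by omega⟩
    have hai : a (j + 1) ∈ B * D ^ j := by
      have := ha _ h₁ h₂
      rw [pow_succ'] at this
      exact mul_mono_right (pow_right_mono le_sup_left j) this
    have hxi : x ^ (n - (j + 1)) ∈ D ^ (n - (j + 1)) :=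
      pow_mem_pow (mem_sup_right (mem_span_singleton_self x)) _
    rw [show n - 1 = j + (n - (j + 1)) by omega, pow_add, ← mul_assoc]
    exact mul_mem_mul hai hxi
  refine ⟨n - 1, pow_le_pow_sub_of_pow_succ_le
    ((sup_pow_succ_le B _ (n - 1)).trans (sup_le le_rfl ?_))⟩
  rwa [Nat.sub_add_cancel hn, span_singleton_pow, span_le, Set.singleton_subset_iff]

theorem Ideal.exists_sup_span_pow_le {I : Ideal R} (T : Finset R)
    (hT : ∀ x ∈ T, IsIntegralOverIdeal I x) :
    ∃ k, ∀ m, (I ⊔ span (T : Set R)) ^ m ≤ I ^ (m - k) := by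
  classical
  induction T using Finset.induction_on with
  | empty => exact ⟨0, by simp⟩
  | insert x T _ ih =>
    obtain ⟨ℓ, hℓ⟩ := ih fun y hy => hT y (Finset.mem_insert_of_mem hy)
    obtain ⟨k, hk⟩ := ((hT x (Finset.mem_insert_self x T)).mono
      (le_sup_left : I ≤ I ⊔ span T)).exists_sup_span_singleton_pow_le
    refine ⟨k + ℓ, fun m => ?_⟩
    rw [Finset.coe_insert, span_insert, sup_comm (span {x}), ← sup_assoc]
    calc _ ≤ (I ⊔ span T) ^ (m - k) := hk m
      _ ≤ I ^ (m - k - ℓ) := hℓ _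
      _ = I ^ (m - (k + ℓ)) := by rw [Nat.sub_sub]

theorem Ideal.exists_intCl_pow_le [IsNoetherianRing R] (I : Ideal R) :
    ∃ k, ∀ m, I.intCl ^ m ≤ I ^ (m - k) := by
  have hfg := IsNoetherian.noetherian I.intCl
  rw [intCl_eq_span] at hfg
  obtain ⟨T, hT, hspan⟩ := (Submodule.fg_span_iff_fg_span_finset_subset _).mp hfg
  obtain ⟨k, hk⟩ := exists_sup_span_pow_le T fun x hx => hT hx
  exact ⟨k, fun m => (pow_right_mono (hspan.trans_le le_sup_right) m).trans (hk m)⟩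

end IntegralClosure

section FrobeniusFamily

variable {R : Type*} [CommRing R] {p : ℕ} {J : ℕ → Ideal R}

theorem pow_pow_mem_of_frobPow_le (hfam : ∀ e, (J e).frobPow p ≤ J (e + 1)) {x : R}
    (hx : x ∈ J 0) (e : ℕ) : x ^ p ^ e ∈ J e := by
  induction e with
  | zero => simpa using hx
  | succ e ih =>
    rw [pow_succ, pow_mul]
    exact hfam e (subset_span ⟨_, ih, rfl⟩)

theorem exists_pow_mul_pow_le_of_frobPow_le (hfam : ∀ e, (J e).frobPow p ≤ J (e + 1))
    {K : Ideal R} (hK : K.FG) (hKJ : K ≤ J 0) : ∃ c, ∀ e, K ^ (c * p ^ e) ≤ J e := by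
  induction K, hK using Submodule.fg_induction with
  | singleton x =>
    refine ⟨1, fun e => ?_⟩
    rw [one_mul, ← Ideal.span, span_singleton_pow, span_le, Set.singleton_subset_iff]
    exact pow_pow_mem_of_frobPow_le hfam (hKJ (subset_span rfl)) e
  | sup K₁ K₂ _ _ h₁ h₂ =>
    obtain ⟨c₁, hc₁⟩ := h₁ (le_sup_left.trans hKJ)
    obtain ⟨c₂, hc₂⟩ := h₂ (le_sup_right.trans hKJ)
    refine ⟨c₁ + c₂, fun e => ?_⟩
    rw [add_mul]
    exact sup_pow_add_le_pow_sup_pow.trans (sup_le (hc₁ e) (hc₂ e))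

theorem exists_pow_le_of_le_radical_of_frobPow_le [IsNoetherianRing R]
    (hfam : ∀ e, (J e).frobPow p ≤ J (e + 1)) {I : Ideal R} (hI : I ≤ (J 0).radical) :
    ∃ C, ∀ e m, C * p ^ e ≤ m → I ^ m ≤ J e := by
  obtain ⟨N, hN⟩ := exists_pow_le_of_le_radical_of_fg hI (IsNoetherian.noetherian I)
  obtain ⟨c, hc⟩ := exists_pow_mul_pow_le_of_frobPow_le hfam (IsNoetherian.noetherian _) hN
  refine ⟨N * c, fun e m hm => ?_⟩
  calc I ^ m ≤ (I ^ N) ^ (c * p ^ e) := by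
        rw [← pow_mul, ← mul_assoc]
        exact pow_le_pow_right hm
    _ ≤ J e := hc e

end FrobeniusFamily

theorem ncard_le_ncard_add_of_sub_mem {t M ℓ : ℕ} {V W : Set (Fin (t + 1) → ℕ)}
    (hV : V.Finite) (hW : ∀ a ∈ W, ∀ i, a i < M) (hsub : ∀ a ∈ W, (fun i => a i - ℓ) ∈ V) :
    W.ncard ≤ V.ncard + (t + 1) * (ℓ * M ^ t) := by
  classical
  let S : Fin (t + 1) → Finset (Fin (t + 1) → ℕ) := fun i =>
    Fintype.piFinset fun j => Finset.range (if j = i then ℓ else M)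
  have hcover : W ⊆ (fun b i => b i + ℓ) '' V ∪ ↑(Finset.univ.biUnion S) := by
    intro a ha
    by_cases hge : ∀ i, ℓ ≤ a i
    · exact Or.inl ⟨_, hsub a ha, funext fun i => Nat.sub_add_cancel (hge i)⟩
    · obtain ⟨i, hi⟩ := not_forall.mp hge
      refine Or.inr (Finset.mem_biUnion.mpr ⟨i, Finset.mem_univ i,
        Fintype.mem_piFinset.mpr fun j => Finset.mem_range.mpr ?_⟩)
      split_ifs with hj
      · exact hj ▸ not_le.mp hi
      · exact hW a ha j
  have hcard : ∀ i, (S i).card = ℓ * M ^ t := by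
    intro i
    simp only [S, Fintype.card_piFinset, Finset.card_range]
    rw [Fin.prod_univ_succAbove _ i, if_pos rfl]
    simp [Fin.succAbove_ne]
  calc W.ncard ≤ ((fun b i => b i + ℓ) '' V ∪ ↑(Finset.univ.biUnion S)).ncard :=
        Set.ncard_le_ncard hcover ((hV.image _).union (Finset.finite_toSet _))
    _ ≤ ((fun b i => b i + ℓ) '' V).ncard + (Finset.univ.biUnion S).card := by
        exact (Set.ncard_union_le _ _).trans_eq (by rw [Set.ncard_coe_finset])
    _ ≤ V.ncard + ∑ i, (S i).card := add_le_add (Set.ncard_image_le hV) Finset.card_biUnion_le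
    _ = V.ncard + (t + 1) * (ℓ * M ^ t) := by simp [hcard]

section Vnu

variable {R : Type*} [CommRing R] {t : ℕ} {I U : Fin t → Ideal R} {J' : Ideal R}

theorem Vnu_mono (hIU : ∀ i, I i ≤ U i) : Vnu I J' ⊆ Vnu U J' := fun a ha hle =>
  ha ((Finset.prod_le_prod' fun i _ => pow_right_mono (hIU i) (a i)).trans hle)

theorem lt_of_mem_Vnu {M : ℕ} (hM : ∀ i m, M ≤ m → U i ^ m ≤ J') {a : Fin t → ℕ}
    (ha : a ∈ Vnu U J') (i : Fin t) : a i < M := by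
  by_contra! h
  exact ha ((le_of_dvd (Finset.dvd_prod_of_mem _ (Finset.mem_univ i))).trans (hM i _ h))

theorem Vnu_finite_s6 {M : ℕ} (hM : ∀ i m, M ≤ m → U i ^ m ≤ J') : (Vnu U J').Finite :=
  (Set.finite_Iic fun _ => M).subset fun _ ha i => (lt_of_mem_Vnu hM ha i).le

theorem sub_mem_Vnu {ℓ : ℕ} (hℓ : ∀ i m, U i ^ m ≤ I i ^ (m - ℓ)) {a : Fin t → ℕ}
    (ha : a ∈ Vnu U J') : (fun i => a i - ℓ) ∈ Vnu I J' := fun hle =>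
  ha ((Finset.prod_le_prod' fun i _ => hℓ i (a i)).trans hle)

theorem ncard_Vnu_le_ncard_Vnu_add {I U : Fin (t + 1) → Ideal R} {ℓ M : ℕ}
    (hIU : ∀ i, I i ≤ U i) (hℓ : ∀ i m, U i ^ m ≤ I i ^ (m - ℓ))
    (hM : ∀ i m, M ≤ m → U i ^ m ≤ J') :
    (Vnu U J').ncard ≤ (Vnu I J').ncard + (t + 1) * (ℓ * M ^ t) :=
  ncard_le_ncard_add_of_sub_mem ((Vnu_finite_s6 hM).subset (Vnu_mono hIU))
    (fun _ ha => lt_of_mem_Vnu hM ha) (fun _ ha => sub_mem_Vnu hℓ ha)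

end Vnu

theorem tendsto_div_pow_of_le_of_le_add {p t K : ℕ} (hp : 1 < p) {v w : ℕ → ℕ} {L : ℝ}
    (hlow : ∀ e, v e ≤ w e) (hup : ∀ e, w e ≤ v e + K * (p ^ e) ^ t)
    (hL : Tendsto (fun e => (v e : ℝ) / (p : ℝ) ^ (e * (t + 1))) atTop (nhds L)) :
    Tendsto (fun e => (w e : ℝ) / (p : ℝ) ^ (e * (t + 1))) atTop (nhds L) := by
  have hp₀ : (0 : ℝ) < p := by exact_mod_cast (by omega : 0 < p)
  have hlow' : ∀ e, (v e : ℝ) / (p : ℝ) ^ (e * (t + 1)) ≤ (w e : ℝ) / (p : ℝ) ^ (e * (t + 1)) :=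
    fun e => by gcongr; exact_mod_cast hlow e
  have hup' : ∀ e, (w e : ℝ) / (p : ℝ) ^ (e * (t + 1)) ≤
      (v e : ℝ) / (p : ℝ) ^ (e * (t + 1)) + K / (p : ℝ) ^ e := fun e => by
    calc (w e : ℝ) / (p : ℝ) ^ (e * (t + 1))
        ≤ (v e + K * ((p : ℝ) ^ e) ^ t) / (p : ℝ) ^ (e * (t + 1)) := by
          gcongr
          exact_mod_cast hup e
      _ = _ := by
          rw [add_div, mul_add, mul_one, pow_add, ← pow_mul, mul_comm e t]
          field_simp
  have herr : Tendsto (fun e : ℕ => (K : ℝ) / (p : ℝ) ^ e) atTop (nhds 0) :=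
    tendsto_const_nhds.div_atTop (tendsto_pow_atTop_atTop_of_one_lt (by exact_mod_cast hp))
  exact tendsto_of_tendsto_of_tendsto_of_le_of_le hL (by simpa using hL.add herr) hlow' hup'

theorem tendsto_ncard_Vnu_of_pow_le_pow_sub {R : Type*} [CommRing R] {p t : ℕ} (hp : 1 < p)
    {I U : Fin (t + 1) → Ideal R} {J : ℕ → Ideal R} {L : ℝ} (hIU : ∀ i, I i ≤ U i)
    (hred : ∀ i, ∃ ℓ, ∀ m, U i ^ m ≤ I i ^ (m - ℓ))
    (hJ : ∀ i, ∃ C, ∀ e m, C * p ^ e ≤ m → I i ^ m ≤ J e)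
    (hL : Tendsto (fun e : ℕ => ((Vnu I (J e)).ncard : ℝ) / (p : ℝ) ^ (e * (t + 1)))
      atTop (nhds L)) :
    Tendsto (fun e : ℕ => ((Vnu U (J e)).ncard : ℝ) / (p : ℝ) ^ (e * (t + 1)))
      atTop (nhds L) := by
  have hred' : ∀ i, ∀ᶠ ℓ in atTop, ∀ m, U i ^ m ≤ I i ^ (m - ℓ) := fun i => by
    obtain ⟨ℓ, hℓ⟩ := hred i
    exact eventually_atTop.2 ⟨ℓ, fun ℓ' h m => (hℓ m).trans (pow_le_pow_right (by omega))⟩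
  have hJ' : ∀ i, ∀ᶠ C in atTop, ∀ e m, C * p ^ e ≤ m → I i ^ m ≤ J e := fun i => by
    obtain ⟨C, hC⟩ := hJ i
    exact eventually_atTop.2 ⟨C, fun C' h e m hm => hC e m ((Nat.mul_le_mul_right _ h).trans hm)⟩
  obtain ⟨ℓ, hℓ⟩ := (eventually_all.2 hred').exists
  obtain ⟨C, hC⟩ := (eventually_all.2 hJ').exists
  have hM : ∀ e i m, (C + ℓ) * p ^ e ≤ m → U i ^ m ≤ J e := fun e i m hm =>
    (hℓ i m).trans (hC i e _ (by
      have : ℓ ≤ ℓ * p ^ e := Nat.le_mul_of_pos_right ℓ (pow_pos (by omega) e)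
      rw [add_mul] at hm
      omega))
  refine tendsto_div_pow_of_le_of_le_add (K := (t + 1) * (ℓ * (C + ℓ) ^ t)) hp
    (fun e => Set.ncard_le_ncard (Vnu_mono hIU) (Vnu_finite_s6 (hM e))) (fun e => ?_) hL
  calc _ ≤ _ := ncard_Vnu_le_ncard_Vnu_add hIU hℓ (hM e)
    _ = _ := by rw [mul_pow]; ring

theorem stmt6_general {R : Type*} [CommRing R] [IsNoetherianRing R] (p : ℕ) [Fact p.Prime]
    {t : ℕ} (I : Fin (t + 1) → Ideal R) (J : ℕ → Ideal R)
    (hfam : ∀ e, (J e).frobPow p ≤ J (e + 1))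
    (hrad : ∀ i, I i ≤ (J 0).radical) (L : ℝ)
    (hL : Tendsto (fun e : ℕ => ((Vnu I (J e)).ncard : ℝ) / (p : ℝ) ^ (e * (t + 1)))
      atTop (nhds L)) :
    Tendsto
      (fun e : ℕ => ((Vnu (Function.update I 0 (I 0).intCl) (J e)).ncard : ℝ) /
        (p : ℝ) ^ (e * (t + 1))) atTop (nhds L) ∧
    Tendsto
      (fun e : ℕ => ((Vnu (fun i => (I i).intCl) (J e)).ncard : ℝ) /
        (p : ℝ) ^ (e * (t + 1))) atTop (nhds L) := by
  have hp : 1 < p := (Fact.out : p.Prime).one_lt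
  have hJ := fun i => exists_pow_le_of_le_radical_of_frobPow_le hfam (hrad i)
  refine ⟨tendsto_ncard_Vnu_of_pow_le_pow_sub hp (fun i => ?_) (fun i => ?_) hJ hL,
    tendsto_ncard_Vnu_of_pow_le_pow_sub hp (fun i => le_intCl _)
      (fun i => exists_intCl_pow_le _) hJ hL⟩
  · rcases eq_or_ne i 0 with rfl | hi
    · simpa using le_intCl (I 0)
    · simp [hi]
  · rcases eq_or_ne i 0 with rfl | hi
    · simpa using exists_intCl_pow_le (I 0)
    · exact ⟨0, fun m => by simp [hi]⟩

/-- The F-volume is unchanged upon replacing `I₁` by its integral closure, and hence upon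
replacing every `Iⱼ` by its integral closure. -/
theorem stmt6 {R : Type*} [CommRing R] [IsNoetherianRing R] (p : ℕ) [Fact p.Prime]
    [CharP R p] {t : ℕ} (I : Fin (t + 1) → Ideal R) (J : ℕ → Ideal R)
    (hfam : ∀ e, (J e).frobPow p ≤ J (e + 1))
    (hrad : ∀ i, I i ≤ (J 0).radical) (L : ℝ)
    (hL : Tendsto (fun e : ℕ => ((Vnu I (J e)).ncard : ℝ) / (p : ℝ) ^ (e * (t + 1)))
      atTop (nhds L)) :
    Tendsto
      (fun e : ℕ => ((Vnu (Function.update I 0 (I 0).intCl) (J e)).ncard : ℝ) /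
        (p : ℝ) ^ (e * (t + 1))) atTop (nhds L) ∧
    Tendsto
      (fun e : ℕ => ((Vnu (fun i => (I i).intCl) (J e)).ncard : ℝ) /
        (p : ℝ) ^ (e * (t + 1))) atTop (nhds L) :=
  stmt6_general p I J hfam hrad L hL
end

section
/- Let R be a Noetherian ring of characteristic p, I₁,…,I_t ideals, J an ideal with I₁,…,I_t ⊆ √J, and c = c^J(I₁ + ⋯ + I_t) the F-threshold of the sum. Then Vol_F^J(I₁,…,I_t) ≤ c^t / t!. -/
open Ideal Filter MeasureTheory

/-!
If `I₁^{a₁} ⋯ I_t^{a_t} ⊄ J^{[q]}` then `(I₁ + ⋯ + I_t)^{a₁ + ⋯ + a_t} ⊄ J^{[q]}`, so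
`a₁ + ⋯ + a_t ≤ ν(q) := ν^{J}_{I₁+⋯+I_t}(q)`; this maximum exists because `I₁ + ⋯ + I_t` is
finitely generated and lies in `√J = √(J^{[q]})`. By stars and bars there are at most
`C(ν(q) + t, t) ≤ (ν(q) + t)^t / t!` such `a`. Dividing by `q^t` with `q = p^e` and letting
`e → ∞`, the shift `t / p^e` vanishes and the bound tends to `c^t / t!`.
-/

theorem Ideal.radical_le_radical_frobPow {R : Type*} [CommRing R] (J : Ideal R) (q : ℕ) :
    J.radical ≤ (J.frobPow q).radical :=
  fun _ ⟨n, hn⟩ => ⟨n * q, by rw [pow_mul]; exact subset_span ⟨_, hn, rfl⟩⟩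

theorem Ideal.prod_pow_le_sum_pow_sum {R : Type*} [CommSemiring R] {ι : Type*}
    (s : Finset ι) (I : ι → Ideal R) (a : ι → ℕ) :
    ∏ i ∈ s, I i ^ a i ≤ (∑ i ∈ s, I i) ^ ∑ i ∈ s, a i := by
  rw [← Finset.prod_pow_eq_pow_sum]
  exact Finset.prod_le_prod' fun i hi =>
    pow_right_mono (Finset.single_le_sum (f := I) (fun _ _ => bot_le) hi) _

theorem le_nuF_of_not_pow_le {R : Type*} [CommRing R] {K J : Ideal R} (hK : K.FG)
    (hKJ : K ≤ J.radical) {n : ℕ} (hn : ¬ K ^ n ≤ J) : n ≤ nuF K J := by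
  obtain ⟨k, hk⟩ := exists_pow_le_of_le_radical_of_fg hKJ hK
  refine le_csSup ⟨k, fun m hm => ?_⟩ hn
  by_contra! hkm
  exact hm ((pow_le_pow_right hkm.le).trans hk)

theorem sum_le_nuF_of_mem_Vnu {R : Type*} [CommRing R] [IsNoetherianRing R] {t : ℕ}
    {I : Fin t → Ideal R} {J : Ideal R} (hI : ∀ i, I i ≤ J.radical) {a : Fin t → ℕ}
    (ha : a ∈ Vnu I J) : ∑ i, a i ≤ nuF (∑ i, I i) J := by
  refine le_nuF_of_not_pow_le (IsNoetherian.noetherian _) ?_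
    fun h => ha ((prod_pow_le_sum_pow_sum _ I a).trans h)
  rw [sum_eq_sup]
  exact Finset.sup_le fun i _ => hI i

theorem ncard_le_choose_of_forall_sum_le {t ν : ℕ} {s : Set (Fin t → ℕ)}
    (hs : ∀ a ∈ s, ∑ i, a i ≤ ν) : s.ncard ≤ (ν + t).choose t := by
  classical
  have hcard : (Finset.univ.finsuppAntidiag ν : Finset (Fin (t + 1) →₀ ℕ)).card =
      (ν + t).choose t := by
    rw [Finset.card_finsuppAntidiag_nat_eq_choose, Finset.card_univ, Fintype.card_fin,
      show t + 1 + ν - 1 = ν + t by omega, Nat.choose_symm_add]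
  rw [← hcard, ← Set.ncard_coe_finset]
  -- `a ↦ (ν - ∑ a, a)` lands in the `(t + 1)`-tuples summing to `ν`
  refine Set.ncard_le_ncard_of_injOn
    (fun a => Finsupp.equivFunOnFinite.symm (Fin.cons (ν - ∑ i, a i) a)) (fun a ha => ?_) ?_
    (Finset.finite_toSet _)
  · simp [Fin.sum_cons, hs a ha]
  · intro a _ b _ hab
    simpa using congrArg (fun f : Fin (t + 1) →₀ ℕ => Fin.tail f) hab

theorem stmt8_general {R : Type*} [CommRing R] [IsNoetherianRing R] (p : ℕ) [Fact p.Prime]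
    {t : ℕ} (I : Fin t → Ideal R) (J : Ideal R)
    (hrad : ∀ i, I i ≤ J.radical) (c L : ℝ)
    (hc : Tendsto (fun e : ℕ => (nuF (∑ i, I i) (J.frobPow (p ^ e)) : ℝ) / (p : ℝ) ^ e)
      atTop (nhds c))
    (hL : Tendsto (fun e : ℕ => ((Vnu I (J.frobPow (p ^ e))).ncard : ℝ) / (p : ℝ) ^ (e * t))
      atTop (nhds L)) :
    L ≤ c ^ t / (Nat.factorial t : ℝ) := by
  have hp : 1 < (p : ℝ) := by exact_mod_cast (Fact.out : p.Prime).one_lt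
  have hshift : Tendsto (fun e : ℕ => ((nuF (∑ i, I i) (J.frobPow (p ^ e)) + t : ℕ) : ℝ) /
      (p : ℝ) ^ e) atTop (nhds c) := by
    have := hc.add (tendsto_const_nhds (x := (t : ℝ)).div_atTop
      (tendsto_pow_atTop_atTop_of_one_lt hp))
    rw [add_zero] at this
    simpa only [Nat.cast_add, add_div] using this
  set ν : ℕ → ℕ := fun e => nuF (∑ i, I i) (J.frobPow (p ^ e))
  refine le_of_tendsto_of_tendsto' hL ((hshift.pow t).div_const _) fun e => ?_
  have hcount : (Vnu I (J.frobPow (p ^ e))).ncard ≤ (ν e + t).choose t :=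
    ncard_le_choose_of_forall_sum_le fun a ha => sum_le_nuF_of_mem_Vnu
      (fun i => (hrad i).trans (J.radical_le_radical_frobPow _)) ha
  calc ((Vnu I (J.frobPow (p ^ e))).ncard : ℝ) / (p : ℝ) ^ (e * t)
      ≤ ((ν e + t).choose t : ℝ) / (p : ℝ) ^ (e * t) := by gcongr
    _ ≤ ((ν e + t : ℕ) : ℝ) ^ t / t.factorial / (p : ℝ) ^ (e * t) := by
        gcongr; exact Nat.choose_le_pow_div _ _
    _ = (((ν e + t : ℕ) : ℝ) / (p : ℝ) ^ e) ^ t / t.factorial := by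
        rw [pow_mul, div_pow]; ring

/-- With `c = c^J(I₁ + ⋯ + I_t)`, one has `Vol_F^J(I₁,…,I_t) ≤ c^t / t!`. -/
theorem stmt8 {R : Type*} [CommRing R] [IsNoetherianRing R] (p : ℕ) [Fact p.Prime]
    [CharP R p] {t : ℕ} (I : Fin t → Ideal R) (J : Ideal R)
    (hrad : ∀ i, I i ≤ J.radical) (c L : ℝ)
    (hc : Tendsto (fun e : ℕ => (nuF (∑ i, I i) (J.frobPow (p ^ e)) : ℝ) / (p : ℝ) ^ e)
      atTop (nhds c))
    (hL : Tendsto (fun e : ℕ => ((Vnu I (J.frobPow (p ^ e))).ncard : ℝ) / (p : ℝ) ^ (e * t))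
      atTop (nhds L)) :
    L ≤ c ^ t / (Nat.factorial t : ℝ) :=
  stmt8_general p I J hrad c L hc hL
end

section
/- Let R be an F-pure Noetherian ring of characteristic p, I₁,…,I_t ideals, and J an ideal with I₁,…,I_t ⊆ √J. If a ∈ ℕ^t satisfies I₁^{a₁}⋯I_t^{a_t} ⊄ J^{[p^e]}, then I₁^{pa₁}⋯I_t^{pa_t} ⊄ J^{[p^{e+1}]}. Consequently the regions B^J(I;p^e) = ⋃_{a ∈ V(p^e)} [0,a₁/p^e] × ⋯ × [0,a_t/p^e] form an increasing chain: B^J(I;p^e) ⊆ B^J(I;p^{e+1}). -/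
open Ideal Filter MeasureTheory

universe u v

/-- A ring homomorphism `f : R → S` is pure if for every `R`-module `M`, the natural map
`M → M ⊗_R S` (with `S` viewed as an `R`-module via `f`) is injective. -/
def RingHom.IsPureHom {R : Type u} {S : Type v} [CommRing R] [CommRing S]
    (f : R →+* S) : Prop :=
  ∀ (M : Type (max u v)) [AddCommGroup M] [Module R M],
    letI : Module R S := Module.compHom S f
    Function.Injective (fun m : M => (TensorProduct.tmul R m (1 : S) : TensorProduct R M S))

/-- `R` is F-pure if the Frobenius endomorphism is a pure ring homomorphism. -/
def IsFPure (p : ℕ) (R : Type u) [CommRing R] [Fact p.Prime] [CharP R p] : Prop :=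
  RingHom.IsPureHom (frobenius R p)

/-- The region `B^{J'}(I; q) = ⋃_{a ∈ V} ∏ᵢ [0, aᵢ/q] ⊆ ℝ^t`. -/
def Breg {R : Type*} [CommRing R] {t : ℕ} (I : Fin t → Ideal R) (J' : Ideal R) (q : ℕ) :
    Set (Fin t → ℝ) :=
  ⋃ a ∈ Vnu I J', Set.univ.pi fun i => Set.Icc (0 : ℝ) ((a i : ℝ) / (q : ℝ))


lemma IsPureHom.comap_span {R S : Type u} [CommRing R] [CommRing S] {f : R →+* S}
    (hf : f.IsPureHom) (A : Ideal R) {x : R}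
    (hx : f x ∈ Ideal.span (f '' (A : Set R))) : x ∈ A := by
  letI : Module R S := Module.compHom S f
  have h := hf (R ⧸ A)
  rw [← Ideal.Quotient.eq_zero_iff_mem]
  apply h
  show (Ideal.Quotient.mk A x) ⊗ₜ[R] (1 : S) = (0 : R ⧸ A) ⊗ₜ[R] (1 : S)
  rw [TensorProduct.zero_tmul]
  have hsmul : ∀ r : R, r • (Ideal.Quotient.mk A 1) = Ideal.Quotient.mk A r := fun r => by
    have h2 := Submodule.Quotient.mk_smul A r (1 : R)
    simpa using h2.symm
  have hact : ∀ (r : R) (s : S), r • s = f r * s := fun r s => rfl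
  have e1 : (Ideal.Quotient.mk A x) ⊗ₜ[R] (1 : S)
      = (Ideal.Quotient.mk A 1) ⊗ₜ[R] (f x) := by
    rw [← hsmul x, ← TensorProduct.smul_tmul', ← TensorProduct.tmul_smul, hact, mul_one]
  rw [e1]
  obtain ⟨c, hsupp, hsum⟩ := Submodule.mem_span_set.mp hx
  rw [← hsum, Finsupp.sum, TensorProduct.tmul_sum]
  apply Finset.sum_eq_zero
  intro y hy
  obtain ⟨a, haA, rfl⟩ := hsupp hy
  have e2 : c (f a) • f a = a • (c (f a)) := by
    rw [hact, smul_eq_mul, mul_comm]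
  rw [e2, TensorProduct.tmul_smul, TensorProduct.smul_tmul', hsmul a,
    Ideal.Quotient.eq_zero_iff_mem.mpr haA, TensorProduct.zero_tmul]

lemma frob_contract {R : Type u} [CommRing R] (p : ℕ) [Fact p.Prime] [CharP R p]
    (hFP : IsFPure p R) (A : Ideal R) {x : R} (hx : x ^ p ∈ A.frobPow p) : x ∈ A := by
  apply IsPureHom.comap_span hFP A
  have himg : ⇑(frobenius R p) '' (A : Set R) = (fun a => a ^ p) '' (A : Set R) := by
    ext y
    simp only [Set.mem_image]
    exact ⟨fun ⟨a, ha, h⟩ => ⟨a, ha, by rw [← h, frobenius_def]⟩,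
      fun ⟨a, ha, h⟩ => ⟨a, ha, by rw [← h, frobenius_def]⟩⟩
  rw [frobenius_def, himg]
  exact hx

lemma frobPow_succ_le {R : Type u} [CommRing R] (p : ℕ) (J : Ideal R) (e : ℕ) :
    J.frobPow (p ^ (e + 1)) ≤ (J.frobPow (p ^ e)).frobPow p := by
  rw [Ideal.frobPow, Ideal.span_le]
  rintro _ ⟨a, haJ, rfl⟩
  show a ^ p ^ (e + 1) ∈ (((J.frobPow (p ^ e)).frobPow p : Ideal R) : Set R)
  have h1 : a ^ p ^ e ∈ J.frobPow (p ^ e) := Ideal.subset_span ⟨a, haJ, rfl⟩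
  have h2 : a ^ p ^ (e + 1) = (a ^ p ^ e) ^ p := by rw [← pow_mul, pow_succ]
  rw [h2]
  exact Ideal.subset_span ⟨a ^ p ^ e, h1, rfl⟩

/-- For `R` F-pure: if `a ∈ V(p^e)` then `p·a ∈ V(p^{e+1})`; consequently the regions
`B^J(I; p^e)` increase with `e`. -/
theorem stmt9 {R : Type u} [CommRing R] [IsNoetherianRing R] (p : ℕ) [Fact p.Prime]
    [CharP R p] (hFP : IsFPure p R) {t : ℕ} (I : Fin t → Ideal R) (J : Ideal R)
    (hrad : ∀ i, I i ≤ J.radical) :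
    (∀ (e : ℕ) (a : Fin t → ℕ), a ∈ Vnu I (J.frobPow (p ^ e)) →
      (fun i => p * a i) ∈ Vnu I (J.frobPow (p ^ (e + 1)))) ∧
    (∀ e : ℕ, Breg I (J.frobPow (p ^ e)) (p ^ e) ⊆
      Breg I (J.frobPow (p ^ (e + 1))) (p ^ (e + 1))) := by
  have key : ∀ (e : ℕ) (a : Fin t → ℕ), a ∈ Vnu I (J.frobPow (p ^ e)) →
      (fun i => p * a i) ∈ Vnu I (J.frobPow (p ^ (e + 1))) := by
    intro e a ha
    simp only [Vnu, Set.mem_setOf_eq] at ha ⊢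
    intro hle
    apply ha
    intro x hxmem
    apply frob_contract p hFP
    apply frobPow_succ_le p J e
    apply hle
    have hpow : x ^ p ∈ (∏ i, I i ^ a i) ^ p := Ideal.pow_mem_pow hxmem p
    have heq : (∏ i, I i ^ a i) ^ p = ∏ i, I i ^ (p * a i) := by
      rw [← Finset.prod_pow]
      exact Finset.prod_congr rfl fun i _ => by rw [← pow_mul, mul_comm]
    rwa [heq] at hpow
  refine ⟨key, ?_⟩
  intro e x hx
  simp only [Breg, Set.mem_iUnion] at hx ⊢
  obtain ⟨a, ha, hxa⟩ := hx
  refine ⟨fun i => p * a i, key e a ha, ?_⟩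
  refine Set.mem_univ_pi.mpr fun i => ?_
  have h1 := Set.mem_univ_pi.mp hxa i
  have hp : (0:ℝ) < p := by exact_mod_cast (Fact.out : p.Prime).pos
  have heq : ((p * a i : ℕ) : ℝ) / ((p ^ (e + 1) : ℕ) : ℝ)
      = ((a i : ℕ) : ℝ) / ((p ^ e : ℕ) : ℝ) := by
    push_cast
    rw [pow_succ]
    field_simp
  show x i ∈ Set.Icc (0:ℝ) (((p * a i : ℕ) : ℝ) / ((p ^ (e + 1) : ℕ) : ℝ))
  rw [heq]
  exact h1
end
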